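/- The 24 points of S³ consisting of the 16 points ((1/√2)u ; (1/√2)v) with u, v ∈ {(±1,0),(0,±1)} scaled by 1/√2 as above, together with the 8 points (0,0,±1/√2,±1/√2) and (±1/√2,±1/√2,0,0), have pairwise Euclidean distance at least 1. -/

import Mathlib

/-! Multiplying by `√2` turns every point of the code into an integer vector `z` with
`‖z‖² = 2`, a root of `D₄`. The squared distance of two code points is then `‖z - z'‖² / 2`, and
`‖z - z'‖² = ‖z‖² + ‖z'‖² - 2⟪z, z'⟫` is an even integer, positive for distinct points, hence at
least `2`. -/

open Real

noncomputable def vec4 (a b c d : ℝ) : EuclideanSpace ℝ (Fin 4) :=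
  (WithLp.equiv 2 (Fin 4 → ℝ)).symm ![a, b, c, d]

def biorth : Set (ℝ × ℝ) :=
  {(1, 0), (-1, 0), (0, 1), (0, -1)}

/-- The 24-point code: the 16 biorthogonal-product points together with the 8 points
`(0,0,±1/√2,±1/√2)` and `(±1/√2,±1/√2,0,0)`. -/
noncomputable def code24 : Set (EuclideanSpace ℝ (Fin 4)) :=
  {x | ∃ u ∈ biorth, ∃ v ∈ biorth,
      x = vec4 (u.1 / Real.sqrt 2) (u.2 / Real.sqrt 2) (v.1 / Real.sqrt 2) (v.2 / Real.sqrt 2)} ∪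
  {x | ∃ s ∈ ({1, -1} : Set ℝ), ∃ t ∈ ({1, -1} : Set ℝ),
      x = vec4 0 0 (s / Real.sqrt 2) (t / Real.sqrt 2) ∨
      x = vec4 (s / Real.sqrt 2) (t / Real.sqrt 2) 0 0}

theorem Int.two_le_sum_sq_sub_of_even {ι : Type*} [Fintype ι] {z z' : ι → ℤ}
    (hz : Even (∑ i, z i ^ 2)) (hz' : Even (∑ i, z' i ^ 2)) (hne : z ≠ z') :
    2 ≤ ∑ i, (z i - z' i) ^ 2 := by
  have h_even : Even (∑ i, (z i - z' i) ^ 2) := by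
    have h_expand : ∑ i, (z i - z' i) ^ 2 = ∑ i, z i ^ 2 + ∑ i, z' i ^ 2 - 2 * ∑ i, z i * z' i := by
      simp only [Finset.mul_sum, ← Finset.sum_add_distrib, ← Finset.sum_sub_distrib]
      exact Finset.sum_congr rfl fun i _ => by ring
    rw [h_expand]
    exact (hz.add hz').sub (even_two_mul _)
  have h_pos : 0 < ∑ i, (z i - z' i) ^ 2 := by
    obtain ⟨i, hi⟩ := Function.ne_iff.mp hne
    have hsub := sub_ne_zero.mpr hi
    exact Finset.sum_pos' (fun j _ => sq_nonneg _) ⟨i, Finset.mem_univ i, by positivity⟩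
  obtain ⟨k, hk⟩ := h_even
  omega

noncomputable def scaledIntPoint {n : ℕ} (z : Fin n → ℤ) : EuclideanSpace ℝ (Fin n) :=
  WithLp.toLp 2 fun i => (z i : ℝ) / √2

section scaledIntPoint

variable {n : ℕ}

theorem norm_scaledIntPoint (z : Fin n → ℤ) :
    ‖scaledIntPoint z‖ = √((∑ i, z i ^ 2 : ℤ) / 2) := by
  rw [EuclideanSpace.norm_eq]
  simp [scaledIntPoint, div_pow, ← Finset.sum_div]

theorem dist_scaledIntPoint (z z' : Fin n → ℤ) :
    dist (scaledIntPoint z) (scaledIntPoint z') = √((∑ i, (z i - z' i) ^ 2 : ℤ) / 2) := by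
  rw [EuclideanSpace.dist_eq]
  simp [scaledIntPoint, Real.dist_eq, sq_abs, ← sub_div, div_pow, ← Finset.sum_div]

theorem norm_scaledIntPoint_eq_one {z : Fin n → ℤ} (hz : ∑ i, z i ^ 2 = 2) :
    ‖scaledIntPoint z‖ = 1 := by
  simp [norm_scaledIntPoint, hz]

theorem one_le_dist_scaledIntPoint {z z' : Fin n → ℤ} (hz : ∑ i, z i ^ 2 = 2)
    (hz' : ∑ i, z' i ^ 2 = 2) (hne : scaledIntPoint z ≠ scaledIntPoint z') :
    1 ≤ dist (scaledIntPoint z) (scaledIntPoint z') := by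
  have h := Int.two_le_sum_sq_sub_of_even (by simp [hz]) (by simp [hz'])
    (fun h => hne (congrArg scaledIntPoint h))
  rw [dist_scaledIntPoint, Real.one_le_sqrt, le_div_iff₀ two_pos, one_mul]
  exact_mod_cast h

end scaledIntPoint

theorem vec4_int_div_sqrt_two (a b c d : ℤ) :
    vec4 (a / √2) (b / √2) (c / √2) (d / √2) = scaledIntPoint ![a, b, c, d] := by
  ext i
  fin_cases i <;> rfl

theorem exists_int_of_mem_biorth {u : ℝ × ℝ} (hu : u ∈ biorth) :
    ∃ p q : ℤ, u = ((p : ℝ), (q : ℝ)) ∧ p ^ 2 + q ^ 2 = 1 := by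
  rcases hu with rfl | rfl | rfl | rfl | rfl
  exacts [⟨1, 0, by simp, rfl⟩, ⟨-1, 0, by simp, rfl⟩, ⟨0, 1, by simp, rfl⟩, ⟨0, -1, by simp, rfl⟩]

theorem exists_int_of_mem_one_neg_one {s : ℝ} (hs : s ∈ ({1, -1} : Set ℝ)) :
    ∃ k : ℤ, s = k ∧ k ^ 2 = 1 := by
  rcases hs with rfl | rfl
  exacts [⟨1, by simp, rfl⟩, ⟨-1, by simp, rfl⟩]

theorem exists_root_of_mem_code24 {x : EuclideanSpace ℝ (Fin 4)} (hx : x ∈ code24) :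
    ∃ z : Fin 4 → ℤ, ∑ i, z i ^ 2 = 2 ∧ x = scaledIntPoint z := by
  rcases hx with ⟨u, hu, v, hv, rfl⟩ | ⟨s, hs, t, ht, rfl | rfl⟩
  · obtain ⟨p, q, rfl, hpq⟩ := exists_int_of_mem_biorth hu
    obtain ⟨p', q', rfl, hpq'⟩ := exists_int_of_mem_biorth hv
    exact ⟨![p, q, p', q'], by simp [Fin.sum_univ_four]; omega, vec4_int_div_sqrt_two ..⟩
  all_goals
    obtain ⟨k, rfl, hk⟩ := exists_int_of_mem_one_neg_one hs
    obtain ⟨l, rfl, hl⟩ := exists_int_of_mem_one_neg_one ht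
  · exact ⟨![0, 0, k, l], by simp [Fin.sum_univ_four]; omega,
      by simpa using vec4_int_div_sqrt_two 0 0 k l⟩
  · exact ⟨![k, l, 0, 0], by simp [Fin.sum_univ_four]; omega,
      by simpa using vec4_int_div_sqrt_two k l 0 0⟩

/-- The 24 points lie on `S³` and have pairwise distance at least 1. -/
theorem stmt12 :
    (∀ x ∈ code24, ‖x‖ = 1) ∧
    (∀ x ∈ code24, ∀ y ∈ code24, x ≠ y → 1 ≤ dist x y) := by
  constructor
  · intro x hx
    obtain ⟨z, hz, rfl⟩ := exists_root_of_mem_code24 hx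
    exact norm_scaledIntPoint_eq_one hz
  · intro x hx y hy hxy
    obtain ⟨z, hz, rfl⟩ := exists_root_of_mem_code24 hx
    obtain ⟨z', hz', rfl⟩ := exists_root_of_mem_code24 hy
    exact one_le_dist_scaledIntPoint hz hz' hxy
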